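/- arXiv:math/0312341 — 4 statements merged into one kernel-verified Lean document; each statement's English description precedes it below -/
import Mathlib

section
/- Fix t > 0 and let μ_t(z) = (1/(πt)) e^{-|z|²/t} for z ∈ ℂ. Then for every entire holomorphic function f : ℂ → ℂ with ∫_ℂ |f(ω)|² μ_t(ω) dω < ∞, and for every z ∈ ℂ, one has |f(z)|² ≤ e^{|z|²/t} · ∫_ℂ |f(ω)|² μ_t(ω) dω. -/
/-!
Put `h ω = f (z + ω) ^ 2 * exp (-2 z̄ ω / t)`. Since `|z + ω|² = |z|² + |ω|² + 2 Re (z̄ ω)`,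
`|f (z + ω)|² μ_t (z + ω) = exp (-|z|² / t) |h ω| μ_t ω` and `|h 0| = |f z|²`, so it suffices to
show `|h 0| ≤ ∫ |h| μ_t` for entire `h`. By Cauchy's formula `|h 0|` is at most the mean of `|h|`
over every circle about `0`; integrating this against the radial probability density `μ_t` and
swapping the angular and planar integrals (Lebesgue measure is rotation invariant) gives the claim.
-/

open MeasureTheory Complex Set Real ComplexConjugate
open scoped ENNReal

theorem Differentiable.ofReal_two_pi_mul_enorm_zero_le_lintegral_cexp_mul {h : ℂ → ℂ}
    (hh : Differentiable ℂ h) (ω : ℂ) :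
    ENNReal.ofReal (2 * π) * ‖h 0‖ₑ ≤ ∫⁻ θ in Ioc 0 (2 * π), ‖h (cexp (θ * I) * ω)‖ₑ := by
  have hmean :=
    (hh.comp (differentiable_id.mul_const ω)).diffContOnCl.circleAverage (c := 0) (R := 1)
  have hint : (2 * π : ℝ) • h 0 = ∫ θ in Ioc 0 (2 * π), h (cexp (θ * I) * ω) := by
    rw [circleAverage_def, intervalIntegral.integral_of_le (by positivity)] at hmean
    simp only [Function.comp_apply, id, circleMap, zero_add, ofReal_one, one_mul, zero_mul] at hmean
    rw [← hmean, smul_inv_smul₀ (by positivity)]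
  calc ENNReal.ofReal (2 * π) * ‖h 0‖ₑ = ‖(2 * π : ℝ) • h 0‖ₑ := by
        rw [enorm_smul, Real.enorm_of_nonneg (by positivity)]
    _ ≤ _ := hint ▸ enorm_integral_le_lintegral_enorm _

theorem lintegral_radial_mul_comp_cexp_mul (g : ℝ → ℝ≥0∞) (F : ℂ → ℝ≥0∞) (θ : ℝ) :
    ∫⁻ ω, g ‖ω‖ * F (cexp (θ * I) * ω) = ∫⁻ ω, g ‖ω‖ * F ω := by
  have hrot := (rotation (Circle.exp θ)).measurePreserving
  have := hrot.lintegral_comp_emb (rotation (Circle.exp θ)).toHomeomorph.measurableEmbedding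
    (fun ω ↦ g ‖ω‖ * F ω)
  simpa [Circle.coe_exp] using this

theorem Differentiable.enorm_zero_mul_lintegral_radial_le {h : ℂ → ℂ} (hh : Differentiable ℂ h)
    {g : ℝ → ℝ≥0∞} (hg : Measurable g) :
    ‖h 0‖ₑ * ∫⁻ ω : ℂ, g ‖ω‖ ≤ ∫⁻ ω, g ‖ω‖ * ‖h ω‖ₑ := by
  have h2π : ENNReal.ofReal (2 * π) ≠ 0 := by simp [Real.pi_pos]
  refine (ENNReal.mul_le_mul_iff_right h2π ENNReal.ofReal_ne_top).mp ?_
  have hrot : Continuous fun p : ℂ × ℝ ↦ h (cexp (p.2 * I) * p.1) := by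
    have := hh.continuous
    fun_prop
  have hmeas :
      Measurable (Function.uncurry fun (ω : ℂ) (θ : ℝ) ↦ g ‖ω‖ * ‖h (cexp (θ * I) * ω)‖ₑ) :=
    ((hg.comp measurable_norm).comp measurable_fst).mul hrot.measurable.enorm
  calc ENNReal.ofReal (2 * π) * (‖h 0‖ₑ * ∫⁻ ω : ℂ, g ‖ω‖)
      = ∫⁻ ω : ℂ, g ‖ω‖ * (ENNReal.ofReal (2 * π) * ‖h 0‖ₑ) := by
        rw [lintegral_mul_const' _ _ (ENNReal.mul_ne_top ENNReal.ofReal_ne_top enorm_ne_top),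
          mul_comm (∫⁻ ω : ℂ, g ‖ω‖), mul_assoc]
    _ ≤ ∫⁻ ω, g ‖ω‖ * ∫⁻ θ in Ioc 0 (2 * π), ‖h (cexp (θ * I) * ω)‖ₑ := by
        gcongr with ω
        exact hh.ofReal_two_pi_mul_enorm_zero_le_lintegral_cexp_mul ω
    _ = ∫⁻ θ in Ioc 0 (2 * π), ∫⁻ ω, g ‖ω‖ * ‖h (cexp (θ * I) * ω)‖ₑ := by
        rw [← lintegral_lintegral_swap hmeas.aemeasurable]
        refine lintegral_congr fun ω ↦ (lintegral_const_mul _ ?_).symm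
        exact (hrot.comp (continuous_const.prodMk continuous_id)).measurable.enorm
    _ = ENNReal.ofReal (2 * π) * ∫⁻ ω, g ‖ω‖ * ‖h ω‖ₑ := by
        simp_rw [lintegral_radial_mul_comp_cexp_mul g (fun ω ↦ ‖h ω‖ₑ)]
        rw [setLIntegral_const, Real.volume_Ioc, sub_zero, mul_comm]

theorem Differentiable.norm_zero_mul_integral_radial_le {h : ℂ → ℂ} (hh : Differentiable ℂ h)
    {g : ℝ → ℝ} (hg : Measurable g) (hg_nonneg : ∀ r, 0 ≤ g r)
    (hint : Integrable fun ω ↦ g ‖ω‖ * ‖h ω‖) :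
    ‖h 0‖ * ∫ ω : ℂ, g ‖ω‖ ≤ ∫ ω, g ‖ω‖ * ‖h ω‖ := by
  rw [← ENNReal.ofReal_le_ofReal_iff (integral_nonneg fun ω ↦ by positivity [hg_nonneg ‖ω‖]),
    ofReal_integral_eq_lintegral_ofReal hint (ae_of_all _ fun ω ↦ by positivity [hg_nonneg ‖ω‖]),
    integral_eq_lintegral_of_nonneg_ae (ae_of_all _ fun ω ↦ hg_nonneg _)
      (hg.comp measurable_norm).aestronglyMeasurable,
    ENNReal.ofReal_mul (norm_nonneg _), ofReal_norm]
  calc ‖h 0‖ₑ * ENNReal.ofReal (∫⁻ ω : ℂ, ENNReal.ofReal (g ‖ω‖)).toReal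
      ≤ ‖h 0‖ₑ * ∫⁻ ω : ℂ, ENNReal.ofReal (g ‖ω‖) := by gcongr; exact ENNReal.ofReal_toReal_le
    _ ≤ ∫⁻ ω, ENNReal.ofReal (g ‖ω‖) * ‖h ω‖ₑ :=
        hh.enorm_zero_mul_lintegral_radial_le hg.ennreal_ofReal
    _ = ∫⁻ ω, ENNReal.ofReal (g ‖ω‖ * ‖h ω‖) := by
        simp_rw [ENNReal.ofReal_mul (hg_nonneg _), ofReal_norm]

/-- `μ_t ω = gaussianWeight t ‖ω‖`. -/
noncomputable def gaussianWeight (t r : ℝ) : ℝ := 1 / (π * t) * rexp (-r ^ 2 / t)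

theorem gaussianWeight_norm_add (t : ℝ) (z ω : ℂ) :
    gaussianWeight t ‖z + ω‖ =
      rexp (-‖z‖ ^ 2 / t) * gaussianWeight t ‖ω‖ * ‖cexp (-2 * (conj z * ω) / t)‖ := by
  have hexp : rexp (-‖z + ω‖ ^ 2 / t) =
      rexp (-‖z‖ ^ 2 / t) * rexp (-‖ω‖ ^ 2 / t) * ‖cexp (-2 * (conj z * ω) / t)‖ := by
    rw [norm_exp, ← Real.exp_add, ← Real.exp_add]
    congr 1
    simp only [← normSq_eq_norm_sq, normSq_apply, add_re, add_im, mul_re, conj_re, conj_im,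
      neg_mul, div_ofReal_re, neg_re, re_ofNat, im_ofNat, mul_im, zero_mul, sub_zero]
    ring
  rw [gaussianWeight, gaussianWeight, hexp]
  ring

theorem integral_gaussianWeight {t : ℝ} (ht : 0 < t) : ∫ ω : ℂ, gaussianWeight t ‖ω‖ = 1 := by
  have hgauss := GaussianFourier.integral_rexp_neg_mul_sq_norm (V := ℂ) (inv_pos.mpr ht)
  rw [finrank_real_complex] at hgauss
  simp_rw [gaussianWeight, integral_const_mul, neg_div, div_eq_inv_mul _ t, ← neg_mul, hgauss]
  norm_num
  field_simp

theorem gaussianWeight_nonneg {t : ℝ} (ht : 0 ≤ t) (r : ℝ) : 0 ≤ gaussianWeight t r := by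
  unfold gaussianWeight; positivity

theorem measurable_gaussianWeight (t : ℝ) : Measurable (gaussianWeight t) := by
  unfold gaussianWeight; fun_prop

/-- Bargmann's pointwise bound for the Segal-Bargmann space `HL²(ℂ, μ_t)`. -/
theorem segal_bargmann_pointwise_bound (t : ℝ) (ht : 0 < t)
    (f : ℂ → ℂ) (hf : Differentiable ℂ f)
    (hint : Integrable fun ω =>
      ‖f ω‖ ^ 2 * (1 / (Real.pi * t) * Real.exp (-(‖ω‖ ^ 2) / t)))
    (z : ℂ) :
    ‖f z‖ ^ 2 ≤ Real.exp (‖z‖ ^ 2 / t) *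
      ∫ ω, ‖f ω‖ ^ 2 * (1 / (Real.pi * t) * Real.exp (-(‖ω‖ ^ 2) / t)) := by
  change Integrable fun ω ↦ ‖f ω‖ ^ 2 * gaussianWeight t ‖ω‖ at hint
  change ‖f z‖ ^ 2 ≤ rexp (‖z‖ ^ 2 / t) * ∫ ω, ‖f ω‖ ^ 2 * gaussianWeight t ‖ω‖
  set h : ℂ → ℂ := fun ω ↦ f (z + ω) ^ 2 * cexp (-2 * (conj z * ω) / t)
  have hh : Differentiable ℂ h := by fun_prop
  have hshift (ω : ℂ) : ‖f (z + ω)‖ ^ 2 * gaussianWeight t ‖z + ω‖ =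
      rexp (-‖z‖ ^ 2 / t) * (gaussianWeight t ‖ω‖ * ‖h ω‖) := by
    rw [gaussianWeight_norm_add, norm_mul, norm_pow]
    ring
  have hint_shift : Integrable fun ω ↦ gaussianWeight t ‖ω‖ * ‖h ω‖ := by
    have := hint.comp_add_left z
    simp_rw [hshift] at this
    exact (integrable_const_mul_iff (Real.exp_pos _).ne'.isUnit _).mp this
  have hmean := hh.norm_zero_mul_integral_radial_le (measurable_gaussianWeight t)
    (gaussianWeight_nonneg ht.le) hint_shift
  rw [integral_gaussianWeight ht, mul_one] at hmean
  calc ‖f z‖ ^ 2 = rexp (‖z‖ ^ 2 / t) * (rexp (-‖z‖ ^ 2 / t) * ‖h 0‖) := by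
        simp [h, ← mul_assoc, ← Real.exp_add, neg_div]
    _ ≤ rexp (‖z‖ ^ 2 / t) * (rexp (-‖z‖ ^ 2 / t) * ∫ ω, gaussianWeight t ‖ω‖ * ‖h ω‖) := by
        gcongr
    _ = rexp (‖z‖ ^ 2 / t) * ∫ ω, ‖f ω‖ ^ 2 * gaussianWeight t ‖ω‖ := by
        rw [← integral_const_mul,
          ← integral_add_left_eq_self (fun ω ↦ ‖f ω‖ ^ 2 * gaussianWeight t ‖ω‖) z]
        simp only [hshift]
end

section
/- Let α : ℂ → (0,∞) be a smooth strictly positive function. There exists t > 0 and a nowhere-zero entire holomorphic function φ : ℂ → ℂ with μ_t(z) = α(z)/|φ(z)|² for all z ∈ ℂ (where μ_t(z) = (1/(πt)) e^{-|z|²/t}) if and only if Δ(log α) is a constant negative function, i.e., Δ(log α)(z) = c for all z with c < 0; in that case one may take t = -4/c. -/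
open MeasureTheory Metric Complex

/-- The Laplacian of a function `f : ℂ → ℝ`, i.e. `∂²f/∂x² + ∂²f/∂y²`,
expressed via second iterated Fréchet derivatives in the directions `1` and `I`. -/
noncomputable def laplacian (f : ℂ → ℝ) (z : ℂ) : ℝ :=
  iteratedFDeriv ℝ 2 f z ![1, 1] + iteratedFDeriv ℝ 2 f z ![Complex.I, Complex.I]

/-- The bilinear map `(c, v) ↦ (c * v).re` as a continuous linear map. -/
noncomputable def Phi : ℂ →L[ℝ] ℂ →L[ℝ] ℝ :=
  (ContinuousLinearMap.compL ℝ ℂ ℂ ℝ Complex.reCLM).comp (ContinuousLinearMap.mul ℝ ℂ)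

lemma Phi_apply (c v : ℂ) : Phi c v = (c * v).re := rfl

/-- The second-derivative map of `z ↦ b * (z.re ^ 2 + z.im ^ 2)`. -/
noncomputable def Qmap (b : ℝ) : ℂ →L[ℝ] ℂ →L[ℝ] ℝ :=
  (2 * b) • (Phi.comp (Complex.conjCLE : ℂ ≃L[ℝ] ℂ).toContinuousLinearMap)

lemma Qmap_apply (b : ℝ) (z v : ℂ) :
    Qmap b z v = 2 * b * (((starRingEnd ℂ) z) * v).re := by
  simp [Qmap, Phi_apply]

lemma hasFDerivAt_quad (b : ℝ) (z : ℂ) :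
    HasFDerivAt (fun z : ℂ => b * (z.re ^ 2 + z.im ^ 2)) (Qmap b z) z := by
  have h1 : HasFDerivAt (fun z : ℂ => z.re) (Complex.reCLM : ℂ →L[ℝ] ℝ) z :=
    Complex.reCLM.hasFDerivAt
  have h2 : HasFDerivAt (fun z : ℂ => z.im) (Complex.imCLM : ℂ →L[ℝ] ℝ) z :=
    Complex.imCLM.hasFDerivAt
  have H := ((h1.mul h1).add (h2.mul h2)).const_mul b
  refine (H.congr_fderiv ?_).congr_of_eventuallyEq (Filter.Eventually.of_forall fun w => ?_)
  · ext v
    simp [Qmap_apply, Complex.mul_re, Complex.conj_re, Complex.conj_im]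
    ring
  · simp only [Pi.mul_apply, Pi.add_apply]; ring

lemma clm_ext_basis {E : Type*} [NormedAddCommGroup E] [NormedSpace ℝ E] {M N : ℂ →L[ℝ] E}
    (h1 : M 1 = N 1) (hI : M Complex.I = N Complex.I) : M = N := by
  ext v
  have hv : v = v.re • (1 : ℂ) + v.im • Complex.I := by
    apply Complex.ext <;> simp
  obtain ⟨x, y, rfl⟩ : ∃ x y : ℝ, v = x • (1 : ℂ) + y • Complex.I := ⟨v.re, v.im, hv⟩
  rw [map_add, map_add, ContinuousLinearMap.map_smul, ContinuousLinearMap.map_smul,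
    ContinuousLinearMap.map_smul, ContinuousLinearMap.map_smul, h1, hI]

lemma lap_apply (f : ℂ → ℝ) (z : ℂ) :
    laplacian f z = fderiv ℝ (fderiv ℝ f) z 1 1 +
      fderiv ℝ (fderiv ℝ f) z Complex.I Complex.I := by
  simp [laplacian, iteratedFDeriv_two_apply]

lemma lap_master {g : ℂ → ℂ} {z₀ : ℂ} (a b : ℝ)
    (hg : ∀ᶠ z in nhds z₀, DifferentiableAt ℂ g z)
    {f : ℂ → ℝ} (hf : ∀ z, f z = a + b * (z.re ^ 2 + z.im ^ 2) + (g z).re) :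
    laplacian f z₀ = 4 * b := by
  have hga : AnalyticAt ℂ g z₀ :=
    DifferentiableOn.analyticAt (s := {z | DifferentiableAt ℂ g z})
      (fun z hz => hz.differentiableWithinAt) hg
  have hderiv_eq : deriv g = fun w => fderiv ℂ g w 1 := by
    funext w; rw [fderiv_apply_one_eq_deriv]
  have hg' : DifferentiableAt ℂ (deriv g) z₀ := by
    rw [hderiv_eq]
    exact ((ContinuousLinearMap.apply ℂ ℂ (1 : ℂ)).differentiable.differentiableAt).comp z₀
      hga.fderiv.differentiableAt
  set D : ℂ →L[ℝ] ℂ :=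
    (ContinuousLinearMap.smulRight (1 : ℂ →L[ℂ] ℂ) (deriv (deriv g) z₀)).restrictScalars ℝ with hD
  set f' : ℂ → ℂ →L[ℝ] ℝ := fun z => Qmap b z + Phi (deriv g z) with hf'
  have h1 : ∀ᶠ z in nhds z₀, HasFDerivAt f (f' z) z := by
    filter_upwards [hg] with z hz
    have hq := hasFDerivAt_quad b z
    have hgr : HasFDerivAt (fun z => (g z).re) (Phi (deriv g z)) z := by
      have hres : HasFDerivAt g
          ((ContinuousLinearMap.smulRight (1 : ℂ →L[ℂ] ℂ) (deriv g z)).restrictScalars ℝ) z :=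
        (hz.hasDerivAt.hasFDerivAt).restrictScalars ℝ
      have H2 : HasFDerivAt (fun z => (g z).re)
          (Complex.reCLM.comp
            ((ContinuousLinearMap.smulRight (1 : ℂ →L[ℂ] ℂ) (deriv g z)).restrictScalars ℝ)) z :=
        (Complex.reCLM.hasFDerivAt (x := g z)).comp z hres
      convert H2 using 1
      ext v
      simp [Phi_apply, mul_comm]
    have hconst : HasFDerivAt (fun _ : ℂ => a) (0 : ℂ →L[ℝ] ℝ) z := hasFDerivAt_const a z
    have H := (hconst.add hq).add hgr
    have hfe : f = fun z => a + b * (z.re ^ 2 + z.im ^ 2) + (g z).re := funext hf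
    rw [hfe]
    simp at H; exact H
  have h2 : HasFDerivAt f' (Qmap b + Phi.comp D) z₀ := by
    have ha : HasFDerivAt (fun z => Qmap b z) (Qmap b) z₀ := (Qmap b).hasFDerivAt
    have hd : HasFDerivAt (deriv g) D z₀ :=
      (hg'.hasDerivAt.hasFDerivAt).restrictScalars ℝ
    exact ha.add (Phi.hasFDerivAt.comp z₀ hd)
  have heq : fderiv ℝ (fderiv ℝ f) z₀ = Qmap b + Phi.comp D := by
    have e1 : fderiv ℝ f =ᶠ[nhds z₀] f' := h1.mono (fun z hz => hz.fderiv)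
    calc fderiv ℝ (fderiv ℝ f) z₀ = fderiv ℝ f' z₀ := e1.fderiv_eq
      _ = _ := h2.fderiv
  rw [lap_apply, heq]
  simp [Qmap_apply, Phi_apply, hD, Complex.mul_re, Complex.conj_re, Complex.conj_im]
  ring
lemma partA {α : ℂ → ℝ} (hpos : ∀ z, 0 < α z) {t : ℝ} (ht : 0 < t) {φ : ℂ → ℂ}
    (hφd : Differentiable ℂ φ) (hφ0 : ∀ z, φ z ≠ 0)
    (heq : ∀ z : ℂ, 1 / (Real.pi * t) * Real.exp (-(‖z‖ ^ 2) / t) =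
      α z / ‖φ z‖ ^ 2) :
    ∀ z, laplacian (fun w => Real.log (α w)) z = 4 * (-1 / t) := by
  intro z₀
  set ω : ℂ := ((‖φ z₀‖ : ℝ) : ℂ) / φ z₀ with hωdef
  have habs0 : (0 : ℝ) < ‖φ z₀‖ := norm_pos_iff.mpr (hφ0 z₀)
  have hωabs : ‖ω‖ = 1 := by
    rw [hωdef, norm_div, Complex.norm_real, Real.norm_eq_abs, abs_of_pos habs0, div_self habs0.ne']
  have hprod : φ z₀ * ω = ((‖φ z₀‖ : ℝ) : ℂ) := by
    rw [hωdef, mul_div_assoc']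
    rw [mul_comm, mul_div_assoc, div_self (hφ0 z₀), mul_one]
  have hmem : φ z₀ * ω ∈ Complex.slitPlane := by
    rw [hprod]
    exact Or.inl (by simpa using habs0)
  set g : ℂ → ℂ := fun z => 2 * Complex.log (φ z * ω) with hgdef
  have hg : ∀ᶠ z in nhds z₀, DifferentiableAt ℂ g z := by
    have hcont : ContinuousAt (fun z => φ z * ω) z₀ :=
      ((hφd z₀).continuousAt.mul continuousAt_const)
    filter_upwards [hcont.eventually_mem (Complex.isOpen_slitPlane.mem_nhds hmem)] with z hz
    exact ((Complex.differentiableAt_log hz).comp z ((hφd z).mul_const ω)).const_mul 2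
  have hπt : (0 : ℝ) < Real.pi * t := mul_pos Real.pi_pos ht
  have hval : ∀ z : ℂ, Real.log (α z) =
      (-Real.log (Real.pi * t)) + (-1 / t) * (z.re ^ 2 + z.im ^ 2) + (g z).re := by
    intro z
    have habs : (0 : ℝ) < ‖φ z‖ := norm_pos_iff.mpr (hφ0 z)
    have hα : α z = 1 / (Real.pi * t) * Real.exp (-(‖z‖ ^ 2) / t)
        * ‖φ z‖ ^ 2 := by
      have h2 := (heq z).symm
      rw [div_eq_iff (by positivity : ‖φ z‖ ^ 2 ≠ 0)] at h2
      exact h2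
    have hgre : (g z).re = 2 * Real.log ‖φ z‖ := by
      rw [hgdef]
      show ((2 : ℂ) * Complex.log (φ z * ω)).re = _
      rw [show ((2 : ℂ) * Complex.log (φ z * ω)).re = 2 * (Complex.log (φ z * ω)).re by
        simp [Complex.mul_re]]
      rw [Complex.log_re, norm_mul, hωabs, mul_one]
    rw [hα, Real.log_mul (by positivity) (by positivity),
      Real.log_mul (by positivity) (Real.exp_ne_zero _), Real.log_exp, hgre,
      Real.log_pow, one_div, Real.log_inv]
    have hsq : (‖z‖ : ℝ) ^ 2 = z.re ^ 2 + z.im ^ 2 := by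
      rw [Complex.sq_norm, Complex.normSq_apply]; ring
    rw [hsq]
    push_cast
    ring
  exact lap_master (-Real.log (Real.pi * t)) (-1 / t) hg hval
lemma entire_deriv {f : ℂ → ℂ} (hf : Differentiable ℂ f) : Differentiable ℂ (deriv f) := by
  have hd : deriv f = fun w => fderiv ℂ f w 1 := by funext w; rw [fderiv_apply_one_eq_deriv]
  rw [hd]
  intro z
  exact ((ContinuousLinearMap.apply ℂ ℂ (1 : ℂ)).differentiable.differentiableAt).comp z
    (hf.analyticAt z).fderiv.differentiableAt

lemma primitive_hasDerivAt {h : ℂ → ℂ} (hh : Differentiable ℂ h) (z₀ : ℂ) :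
    HasDerivAt (fun z => ∫ s in (0:ℝ)..1, z * h ((s : ℂ) * z)) (h z₀) z₀ := by
  have hcont : Continuous h := hh.continuous
  have hdh : Differentiable ℂ (deriv h) := entire_deriv hh
  have hcont' : Continuous (deriv h) := hdh.continuous
  set μ : Measure ℝ := volume.restrict (Set.Ioc (0:ℝ) 1) with hμ
  set c : ℂ → ℝ → ℂ := fun z s => h ((s:ℂ) * z) + z * (deriv h ((s:ℂ) * z) * (s:ℂ)) with hcdef
  set F' : ℂ → ℝ → ℂ →L[ℂ] ℂ :=
    fun z s => ContinuousLinearMap.smulRight (1 : ℂ →L[ℂ] ℂ) (c z s) with hF'def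
  -- continuity facts
  have hFc : ∀ z : ℂ, Continuous (fun s : ℝ => z * h ((s:ℂ) * z)) := fun z =>
    continuous_const.mul (hcont.comp (Complex.continuous_ofReal.mul continuous_const))
  have hcc : ∀ z : ℂ, Continuous (c z) := fun z => by
    apply Continuous.add
    · exact hcont.comp (Complex.continuous_ofReal.mul continuous_const)
    · exact continuous_const.mul
        ((hcont'.comp (Complex.continuous_ofReal.mul continuous_const)).mul
          Complex.continuous_ofReal)
  -- bounds on a compact set
  obtain ⟨C₁, hC₁⟩ := (isCompact_closedBall (0:ℂ) (‖z₀‖+1)).exists_bound_of_continuousOn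
    hcont.continuousOn
  obtain ⟨C₂, hC₂⟩ := (isCompact_closedBall (0:ℂ) (‖z₀‖+1)).exists_bound_of_continuousOn
    hcont'.continuousOn
  have hR0 : (0:ℝ) ≤ ‖z₀‖ + 1 := by positivity
  have h0mem : (0:ℂ) ∈ closedBall (0:ℂ) (‖z₀‖+1) := by
    simp only [mem_closedBall, dist_self]
    positivity
  have hC₂0 : 0 ≤ C₂ := le_trans (norm_nonneg _) (hC₂ 0 h0mem)
  have hmemK : ∀ x ∈ ball z₀ 1, ∀ s ∈ Set.Ioc (0:ℝ) 1,
      ((s:ℂ) * x) ∈ closedBall (0:ℂ) (‖z₀‖+1) := by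
    intro x hx s hs
    have hxn : ‖x‖ ≤ ‖z₀‖ + 1 := by
      have := mem_ball_iff_norm.mp hx
      calc ‖x‖ = ‖z₀ + (x - z₀)‖ := by ring_nf
        _ ≤ ‖z₀‖ + ‖x - z₀‖ := norm_add_le _ _
        _ ≤ ‖z₀‖ + 1 := by linarith
    rw [mem_closedBall, dist_zero_right, norm_mul, Complex.norm_real]
    calc |s| * ‖x‖ ≤ 1 * (‖z₀‖ + 1) := by
          apply mul_le_mul _ hxn (norm_nonneg _) zero_le_one
          rw [abs_of_pos hs.1]; exact hs.2
      _ = ‖z₀‖ + 1 := one_mul _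
  -- the parametric integral theorem
  have key : HasFDerivAt (fun z : ℂ => ∫ s, z * h ((s:ℂ) * z) ∂μ)
      (∫ s, F' z₀ s ∂μ) z₀ := by
    apply hasFDerivAt_integral_of_dominated_of_fderiv_le (s := ball z₀ 1)
      (bound := fun _ => C₁ + (‖z₀‖+1) * C₂) (ball_mem_nhds z₀ one_pos)
    · exact Filter.Eventually.of_forall fun x => ((hFc x).aestronglyMeasurable)
    · exact (hFc z₀).integrableOn_Ioc
    · exact (((ContinuousLinearMap.smulRightL ℂ ℂ ℂ (1 : ℂ →L[ℂ] ℂ)).continuous.comp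
        (hcc z₀))).aestronglyMeasurable
    · refine (Filter.eventually_of_mem (self_mem_ae_restrict measurableSet_Ioc) ?_)
      intro s hs x hx
      have hnorm : ‖F' x s‖ = ‖c x s‖ := by
        rw [hF'def]
        simp [ContinuousLinearMap.norm_smulRight_apply]
      rw [hnorm, hcdef]
      have hmem := hmemK x hx s hs
      have hb1 : ‖h ((s:ℂ) * x)‖ ≤ C₁ := hC₁ _ hmem
      have hb2 : ‖deriv h ((s:ℂ) * x)‖ ≤ C₂ := hC₂ _ hmem
      have hxn : ‖x‖ ≤ ‖z₀‖ + 1 := by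
        have := mem_ball_iff_norm.mp hx
        calc ‖x‖ = ‖z₀ + (x - z₀)‖ := by ring_nf
          _ ≤ ‖z₀‖ + ‖x - z₀‖ := norm_add_le _ _
          _ ≤ ‖z₀‖ + 1 := by linarith
      have hs1 : ‖((s:ℝ):ℂ)‖ ≤ 1 := by
        rw [Complex.norm_real, Real.norm_eq_abs, abs_of_pos hs.1]; exact hs.2
      calc ‖h ((s:ℂ) * x) + x * (deriv h ((s:ℂ) * x) * (s:ℂ))‖
          ≤ ‖h ((s:ℂ) * x)‖ + ‖x * (deriv h ((s:ℂ) * x) * (s:ℂ))‖ := norm_add_le _ _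
        _ ≤ C₁ + (‖z₀‖+1) * C₂ := by
            apply add_le_add hb1
            rw [norm_mul, norm_mul]
            calc ‖x‖ * (‖deriv h ((s:ℂ)*x)‖ * ‖((s:ℝ):ℂ)‖)
                ≤ (‖z₀‖+1) * (C₂ * 1) := by
                  apply mul_le_mul hxn _ (by positivity) hR0
                  exact mul_le_mul hb2 hs1 (norm_nonneg _) hC₂0
              _ = (‖z₀‖+1) * C₂ := by ring
    · exact integrableOn_const measure_Ioc_lt_top.ne
    · refine Filter.Eventually.of_forall fun s => fun x _ => ?_
      have inner : HasDerivAt (fun x : ℂ => (s:ℂ) * x) ((s:ℂ)) x := by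
        simpa using (hasDerivAt_id x).const_mul ((s:ℂ))
      have hcomp : HasDerivAt (fun x : ℂ => h ((s:ℂ) * x)) (deriv h ((s:ℂ)*x) * (s:ℂ)) x :=
        (hh _).hasDerivAt.comp x inner
      have total := (hasDerivAt_id x).mul hcomp
      have : HasDerivAt (fun x : ℂ => x * h ((s:ℂ)*x)) (c x s) x := by
        refine total.congr_deriv ?_
        rw [hcdef]; simp only [id_eq]; ring
      exact this.hasFDerivAt
  -- compute the derivative integral
  have hcint : Integrable (c z₀) μ := (hcc z₀).integrableOn_Ioc
  have hint1 : (∫ s, F' z₀ s ∂μ) =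
      ContinuousLinearMap.smulRight (1 : ℂ →L[ℂ] ℂ) (∫ s, c z₀ s ∂μ) := by
    have := (ContinuousLinearMap.smulRightL ℂ ℂ ℂ (1 : ℂ →L[ℂ] ℂ)).integral_comp_comm hcint
    exact this
  have hFTC : (∫ s, c z₀ s ∂μ) = h z₀ := by
    have hψ : ∀ s ∈ Set.uIcc (0:ℝ) 1,
        HasDerivAt (fun s : ℝ => (s:ℂ) * h ((s:ℂ) * z₀)) (c z₀ s) s := by
      intro s _
      have hofReal : HasDerivAt (fun s : ℝ => ((s:ℝ):ℂ)) 1 s := by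
        exact Complex.ofRealCLM.hasDerivAt (x := s)
      have hmul : HasDerivAt (fun s : ℝ => ((s:ℝ):ℂ) * z₀) z₀ s := by
        simpa using hofReal.mul_const z₀
      have hfd : HasFDerivAt h
          ((ContinuousLinearMap.smulRight (1 : ℂ →L[ℂ] ℂ)
            (deriv h ((s:ℂ)*z₀))).restrictScalars ℝ) ((s:ℂ)*z₀) :=
        ((hh _).hasDerivAt.hasFDerivAt).restrictScalars ℝ
      have hcomp : HasDerivAt (fun s : ℝ => h (((s:ℝ):ℂ) * z₀))
          (z₀ * deriv h ((s:ℂ)*z₀)) s := by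
        have := hfd.comp_hasDerivAt s hmul
        simp [smul_eq_mul] at this; exact this
      have total := hofReal.mul hcomp
      refine total.congr_deriv ?_
      rw [hcdef]; ring
    have hci : IntervalIntegrable (c z₀) volume 0 1 := ((hcc z₀)).intervalIntegrable 0 1
    have := intervalIntegral.integral_eq_sub_of_hasDerivAt hψ hci
    rw [intervalIntegral.integral_of_le zero_le_one] at this
    rw [hμ]
    rw [this]
    simp
  rw [hint1, hFTC] at key
  have hinteq : (fun z : ℂ => ∫ s in (0:ℝ)..1, z * h ((s : ℂ) * z)) =
      fun z : ℂ => ∫ s, z * h ((s:ℂ) * z) ∂μ := by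
    funext z
    rw [intervalIntegral.integral_of_le zero_le_one, hμ]
  rw [hinteq]
  have := key.hasDerivAt
  simpa using this
lemma Qmap_one_one (b : ℝ) : Qmap b 1 1 = 2 * b := by
  simp [Qmap_apply]

lemma Qmap_I_I (b : ℝ) : Qmap b Complex.I Complex.I = 2 * b := by
  simp [Qmap_apply, Complex.mul_re]

lemma partB {α : ℂ → ℝ} (hα : ContDiff ℝ (⊤ : ℕ∞) α) (hpos : ∀ z, 0 < α z)
    {c : ℝ} (hc : c < 0) (hlap : ∀ z, laplacian (fun w => Real.log (α w)) z = c) :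
    ∃ φ : ℂ → ℂ, Differentiable ℂ φ ∧ (∀ z, φ z ≠ 0) ∧
      ∀ z : ℂ, 1 / (Real.pi * (-4 / c)) * Real.exp (-(‖z‖ ^ 2) / (-4 / c)) =
        α z / ‖φ z‖ ^ 2 := by
  set t : ℝ := -4 / c with htdef
  have ht : 0 < t := by
    rw [htdef]
    exact div_pos_iff.mpr (Or.inr ⟨by norm_num, hc⟩)
  have hπt : (0:ℝ) < Real.pi * t := mul_pos Real.pi_pos ht
  set u : ℂ → ℝ := fun z => Real.log (α z) with hudef
  have hu : ContDiff ℝ (⊤ : ℕ∞) u := hα.log (fun z => (hpos z).ne')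
  set b : ℝ := -c / 4 with hbdef
  have hbt : b = 1 / t := by rw [hbdef, htdef]; field_simp
  set Q : ℂ → ℝ := fun z => b * (z.re ^ 2 + z.im ^ 2) with hQdef
  have hre : ContDiff ℝ (⊤ : ℕ∞) (fun z : ℂ => z.re) := Complex.reCLM.contDiff
  have him : ContDiff ℝ (⊤ : ℕ∞) (fun z : ℂ => z.im) := Complex.imCLM.contDiff
  have hQ : ContDiff ℝ (⊤ : ℕ∞) Q := contDiff_const.mul ((hre.pow 2).add (him.pow 2))
  set w : ℂ → ℝ := fun z => u z + Q z with hwdef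
  have hw : ContDiff ℝ (⊤ : ℕ∞) w := hu.add hQ
  have hwdiff : Differentiable ℝ w := hw.differentiable (by simp)
  have hwfd_diff : Differentiable ℝ (fderiv ℝ w) :=
    (hw.fderiv_right (m := (⊤ : ℕ∞)) (by simp)).differentiable (by simp)
  set A : ℂ → ℂ →L[ℝ] ℂ →L[ℝ] ℝ := fun z => fderiv ℝ (fderiv ℝ w) z with hAdef
  have hA : ∀ z, HasFDerivAt (fderiv ℝ w) (A z) z := fun z => (hwfd_diff z).hasFDerivAt
  have hsymm : ∀ z, A z 1 Complex.I = A z Complex.I 1 := fun z =>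
    second_derivative_symmetric (fun y => (hwdiff y).hasFDerivAt) (hA z) 1 Complex.I
  have hufdiff : Differentiable ℝ u := hu.differentiable (by simp)
  have hufd_diff : Differentiable ℝ (fderiv ℝ u) :=
    (hu.fderiv_right (m := (⊤ : ℕ∞)) (by simp)).differentiable (by simp)
  have hfw_eq : fderiv ℝ w = fun z => fderiv ℝ u z + Qmap b z := by
    funext z
    exact ((hufdiff z).hasFDerivAt.add (hasFDerivAt_quad b z)).fderiv
  have htrace : ∀ z, A z 1 1 + A z Complex.I Complex.I = 0 := by
    intro z
    have hAz : A z = fderiv ℝ (fderiv ℝ u) z + Qmap b := by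
      show fderiv ℝ (fderiv ℝ w) z = _
      rw [hfw_eq]
      exact ((hufd_diff z).hasFDerivAt.add (Qmap b).hasFDerivAt).fderiv
    have hlapz := hlap z
    rw [lap_apply] at hlapz
    rw [hAz]
    simp only [ContinuousLinearMap.add_apply]
    rw [Qmap_one_one, Qmap_I_I]
    have : fderiv ℝ (fderiv ℝ (fun w => Real.log (α w))) z 1 1 +
        fderiv ℝ (fderiv ℝ (fun w => Real.log (α w))) z Complex.I Complex.I = c := hlapz
    have hueq : (fun w => Real.log (α w)) = u := rfl
    rw [hueq] at this
    rw [hbdef]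
    linarith
  -- the holomorphic function h = w_x - i w_y
  set hfun : ℂ → ℂ := fun z =>
    ((fderiv ℝ w z 1 : ℝ) : ℂ) - Complex.I * ((fderiv ℝ w z Complex.I : ℝ) : ℂ) with hhdef
  set L : ℂ → ℂ →L[ℝ] ℂ := fun z =>
    Complex.ofRealCLM.comp ((ContinuousLinearMap.apply ℝ ℝ (1:ℂ)).comp (A z)) -
    Complex.I • (Complex.ofRealCLM.comp
      ((ContinuousLinearMap.apply ℝ ℝ (Complex.I)).comp (A z))) with hLdef
  have hLapp : ∀ z v, L z v =
      ((A z v 1 : ℝ) : ℂ) - Complex.I * ((A z v Complex.I : ℝ) : ℂ) := by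
    intro z v
    simp [hLdef, smul_eq_mul]
  have hhL : ∀ z, HasFDerivAt hfun (L z) z := by
    intro z
    have h1' : HasFDerivAt (fun z => ((fderiv ℝ w z (1:ℂ) : ℝ) : ℂ))
        (Complex.ofRealCLM.comp ((ContinuousLinearMap.apply ℝ ℝ (1:ℂ)).comp (A z))) z :=
      Complex.ofRealCLM.hasFDerivAt.comp z
        ((ContinuousLinearMap.apply ℝ ℝ (1:ℂ)).hasFDerivAt.comp z (hA z))
    have h2' : HasFDerivAt (fun z => ((fderiv ℝ w z (Complex.I) : ℝ) : ℂ))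
        (Complex.ofRealCLM.comp ((ContinuousLinearMap.apply ℝ ℝ (Complex.I)).comp (A z))) z :=
      Complex.ofRealCLM.hasFDerivAt.comp z
        ((ContinuousLinearMap.apply ℝ ℝ (Complex.I)).hasFDerivAt.comp z (hA z))
    exact h1'.sub (h2'.const_mul Complex.I)
  have hhdiffC : Differentiable ℂ hfun := by
    intro z
    have hLc : (ContinuousLinearMap.smulRight (1 : ℂ →L[ℂ] ℂ) (L z 1)).restrictScalars ℝ
        = L z := by
      apply clm_ext_basis
      · simp
      · have e1 := hsymm z
        have e2 : A z Complex.I Complex.I = -(A z 1 1) := by linarith [htrace z]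
        have lhs : ((ContinuousLinearMap.smulRight (1 : ℂ →L[ℂ] ℂ)
            (L z 1)).restrictScalars ℝ) Complex.I = Complex.I * L z 1 := by
          simp [mul_comm]
        rw [lhs, hLapp z 1, hLapp z Complex.I, ← e1, e2]
        have hI2 : (Complex.I) ^ 2 = -1 := Complex.I_sq
        push_cast
        linear_combination (-((((A z) 1) Complex.I : ℝ) : ℂ)) * hI2
    exact (differentiableAt_iff_restrictScalars ℝ (hhL z).differentiableAt).2
      ⟨_, by rw [(hhL z).fderiv]; exact hLc⟩
  -- primitive of h
  set G : ℂ → ℂ := fun z => ∫ s in (0:ℝ)..1, z * hfun ((s:ℂ)*z) with hGdef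
  have hG : ∀ z, HasDerivAt G (hfun z) z := fun z => primitive_hasDerivAt hhdiffC z
  have hGdiff : Differentiable ℂ G := fun z => (hG z).differentiableAt
  -- Re G has the same gradient as w
  have hfw_basis : ∀ z, Phi (hfun z) = fderiv ℝ w z := by
    intro z
    apply clm_ext_basis
    · rw [Phi_apply, mul_one, hhdef]
      simp [Complex.sub_re, Complex.mul_re]
    · rw [Phi_apply, hhdef]
      simp [Complex.sub_re, Complex.mul_re, Complex.mul_im]
  have hF1 : ∀ z, HasFDerivAt (fun z => (G z).re - w z) (0 : ℂ →L[ℝ] ℝ) z := by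
    intro z
    have hres : HasFDerivAt G
        ((ContinuousLinearMap.smulRight (1:ℂ→L[ℂ]ℂ) (hfun z)).restrictScalars ℝ) z :=
      ((hG z).hasFDerivAt).restrictScalars ℝ
    have hGre : HasFDerivAt (fun z => (G z).re) (Phi (hfun z)) z := by
      have H2 := (Complex.reCLM.hasFDerivAt (x := G z)).comp z hres
      refine H2.congr_fderiv ?_
      ext v
      simp [Phi_apply, mul_comm]
    have := hGre.sub (hwdiff z).hasFDerivAt
    rw [hfw_basis z, sub_self] at this
    exact this
  have hconst : ∀ z, (G z).re - w z = (G 0).re - w 0 := fun z =>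
    is_const_of_fderiv_eq_zero (fun y => (hF1 y).differentiableAt)
      (fun y => (hF1 y).fderiv) z 0
  set k : ℝ := (G 0).re - w 0 with hkdef
  set s₀ : ℝ := Real.log (Real.pi * t) - k with hs₀def
  refine ⟨fun z => Complex.exp ((2⁻¹ : ℝ) • (G z + (s₀ : ℂ))), ?_, ?_, ?_⟩
  · exact (((hGdiff.add_const _).const_smul (2⁻¹ : ℝ)).cexp)
  · intro z; exact Complex.exp_ne_zero _
  · intro z
    have habsφ : ‖Complex.exp ((2⁻¹ : ℝ) • (G z + (s₀:ℂ)))‖ =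
        Real.exp (2⁻¹ * ((G z).re + s₀)) := by
      rw [Complex.norm_exp]
      congr 1
      simp [Complex.smul_re]
      ring
    rw [habsφ]
    have hsq : Real.exp (2⁻¹ * ((G z).re + s₀)) ^ 2 = Real.exp ((G z).re + s₀) := by
      rw [sq, ← Real.exp_add]; ring_nf
    rw [hsq]
    have hGz : (G z).re = w z + k := by linarith [hconst z]
    have hX : (G z).re + s₀ = w z + Real.log (Real.pi * t) := by
      rw [hGz, hs₀def]; ring
    rw [hX]
    have hwz : w z = Real.log (α z) + Q z := rfl
    rw [hwz, Real.exp_add, Real.exp_add, Real.exp_log hπt, Real.exp_log (hpos z)]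
    have habsz : (‖z‖ : ℝ) ^ 2 = z.re ^ 2 + z.im ^ 2 := by
      rw [Complex.sq_norm, Complex.normSq_apply]; ring
    have hQz : Q z = b * (z.re ^ 2 + z.im ^ 2) := rfl
    rw [habsz, hQz, hbt]
    rw [show -(z.re ^ 2 + z.im ^ 2) / t = -(1 / t * (z.re ^ 2 + z.im ^ 2)) by ring]
    rw [Real.exp_neg]
    have he : (0:ℝ) < Real.exp (1 / t * (z.re ^ 2 + z.im ^ 2)) := Real.exp_pos _
    set E := Real.exp (1 / t * (z.re ^ 2 + z.im ^ 2)) with hEdef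
    rw [show α z * E * (Real.pi * t) = α z * (E * (Real.pi * t)) by ring]
    have hcancel : α z / (α z * (E * (Real.pi * t))) = 1 / (E * (Real.pi * t)) := by
      rw [div_mul_eq_div_div, div_self (hpos z).ne']
    rw [hcancel, one_div, mul_inv]
    ring
/-- `HL²(ℂ, α)` is holomorphically equivalent to a Segal-Bargmann space iff `Δ(log α)` is a
negative constant `c`; in that case one may take `t = -4/c`. -/
theorem equiv_segal_bargmann_iff_laplacian_log_const_neg
    (α : ℂ → ℝ) (hα : ContDiff ℝ (⊤ : ℕ∞) α) (hpos : ∀ z, 0 < α z) :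
    ((∃ t > (0 : ℝ), ∃ φ : ℂ → ℂ, Differentiable ℂ φ ∧ (∀ z, φ z ≠ 0) ∧
        ∀ z : ℂ, 1 / (Real.pi * t) * Real.exp (-(‖z‖ ^ 2) / t) =
          α z / ‖φ z‖ ^ 2) ↔
      (∃ c < (0 : ℝ), ∀ z, laplacian (fun w => Real.log (α w)) z = c)) ∧
    (∀ c < (0 : ℝ), (∀ z, laplacian (fun w => Real.log (α w)) z = c) →
      ∃ φ : ℂ → ℂ, Differentiable ℂ φ ∧ (∀ z, φ z ≠ 0) ∧
        ∀ z : ℂ, 1 / (Real.pi * (-4 / c)) * Real.exp (-(‖z‖ ^ 2) / (-4 / c)) =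
          α z / ‖φ z‖ ^ 2) := by
  constructor
  · constructor
    · rintro ⟨t, ht, φ, hφd, hφ0, heq⟩
      refine ⟨4 * (-1 / t), ?_, partA hpos ht hφd hφ0 heq⟩
      rw [show (4 : ℝ) * (-1 / t) = -(4 / t) by ring]
      have h4t : 0 < 4 / t := by positivity
      linarith
    · rintro ⟨c, hc, hlap⟩
      obtain ⟨φ, h1, h2, h3⟩ := partB hα hpos hc hlap
      refine ⟨-4 / c, ?_, φ, h1, h2, h3⟩
      exact div_pos_iff.mpr (Or.inr ⟨by norm_num, hc⟩)
  · intro c hc hlap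
    exact partB hα hpos hc hlap
end

section
/- Let U ⊆ ℂ be a nonempty open set, let α, β : U → (0,∞) be measurable weights, and suppose φ : U → ℂ is a nowhere-zero holomorphic function with β(z) = α(z)/|φ(z)|² for all z ∈ U. For a weight γ and z ∈ U, let K_γ(z) denote the supremum of |f(z)|² over all f ∈ HL²(U, γ) with ∫_U |f|² γ ≤ 1 (the diagonal of the reproducing kernel, i.e., the optimal pointwise-bound constant at z). Then α(z) · K_α(z) = β(z) · K_β(z) for every z ∈ U. -/
/-! Multiplication by `φ` maps `HL²(U, ‖φ‖² β)` isometrically into `HL²(U, β)`, so every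
competitor for `K_α(z)` yields one for `K_β(z)`; applying this to `φ` and to `φ⁻¹` gives both
inequalities. -/

open MeasureTheory Metric Complex
open scoped ENNReal

/-- The diagonal of the reproducing kernel of `HL²(U, γ)`: the optimal pointwise-bound
constant at `z`, i.e. the supremum of `|f z|²` over holomorphic `f` on `U` with
`∫_U |f|² γ ≤ 1`. -/
noncomputable def kernelDiag (U : Set ℂ) (γ : ℂ → ℝ) (z : ℂ) : ℝ≥0∞ :=
  sSup { x : ℝ≥0∞ | ∃ f : ℂ → ℂ, DifferentiableOn ℂ f U ∧
      MeasureTheory.IntegrableOn (fun ω => ‖f ω‖ ^ 2 * γ ω) U ∧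
      (∫ ω in U, ‖f ω‖ ^ 2 * γ ω) ≤ 1 ∧
      x = ENNReal.ofReal (‖f z‖ ^ 2) }

theorem ofReal_norm_sq_le_kernelDiag {U : Set ℂ} {γ : ℂ → ℝ} {f : ℂ → ℂ} (z : ℂ)
    (hf : DifferentiableOn ℂ f U) (hfi : IntegrableOn (fun ω => ‖f ω‖ ^ 2 * γ ω) U)
    (hle : ∫ ω in U, ‖f ω‖ ^ 2 * γ ω ≤ 1) :
    ENNReal.ofReal (‖f z‖ ^ 2) ≤ kernelDiag U γ z :=
  le_sSup ⟨f, hf, hfi, hle, rfl⟩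

theorem ofReal_mul_kernelDiag_le {U : Set ℂ} (hU : MeasurableSet U) {α β : ℂ → ℝ}
    {φ : ℂ → ℂ} (hφ : DifferentiableOn ℂ φ U) (hαβ : ∀ ω ∈ U, α ω = ‖φ ω‖ ^ 2 * β ω)
    {z : ℂ} (hz : z ∈ U) :
    ENNReal.ofReal (α z) * kernelDiag U α z ≤ ENNReal.ofReal (β z) * kernelDiag U β z := by
  rw [kernelDiag, ENNReal.mul_sSup]
  refine iSup₂_le ?_
  rintro _ ⟨f, hf, hfi, hfle, rfl⟩
  have hweight : ∀ ω ∈ U, ‖f ω * φ ω‖ ^ 2 * β ω = ‖f ω‖ ^ 2 * α ω := by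
    intro ω hω
    rw [norm_mul, hαβ ω hω]
    ring
  have hgi : IntegrableOn (fun ω => ‖f ω * φ ω‖ ^ 2 * β ω) U :=
    hfi.congr_fun (fun ω hω => (hweight ω hω).symm) hU
  have hgle : ∫ ω in U, ‖f ω * φ ω‖ ^ 2 * β ω ≤ 1 := by
    rwa [setIntegral_congr_fun hU hweight]
  calc ENNReal.ofReal (α z) * ENNReal.ofReal (‖f z‖ ^ 2)
      = ENNReal.ofReal (β z) * ENNReal.ofReal (‖f z * φ z‖ ^ 2) := by
        rw [← ENNReal.ofReal_mul' (sq_nonneg _), ← ENNReal.ofReal_mul' (sq_nonneg _),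
          mul_comm (α z), mul_comm (β z), hweight z hz]
    _ ≤ ENNReal.ofReal (β z) * kernelDiag U β z := by
        gcongr
        exact ofReal_norm_sq_le_kernelDiag z (hf.mul hφ) hgi hgle

theorem weight_mul_kernelDiag_invariant_general
    (U : Set ℂ) (hU : IsOpen U)
    (α β : ℂ → ℝ)
    (φ : ℂ → ℂ) (hφ : DifferentiableOn ℂ φ U) (hφ0 : ∀ z ∈ U, φ z ≠ 0)
    (hβα : ∀ z ∈ U, β z = α z / ‖φ z‖ ^ 2) :
    ∀ z ∈ U, ENNReal.ofReal (α z) * kernelDiag U α z =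
      ENNReal.ofReal (β z) * kernelDiag U β z := by
  intro z hz
  have hαβ : ∀ ω ∈ U, α ω = ‖φ ω‖ ^ 2 * β ω := fun ω hω => by
    have : ‖φ ω‖ ≠ 0 := norm_ne_zero_iff.mpr (hφ0 ω hω)
    rw [hβα ω hω]
    field_simp
  have hβα' : ∀ ω ∈ U, β ω = ‖(φ ω)⁻¹‖ ^ 2 * α ω := fun ω hω => by
    rw [hβα ω hω, norm_inv]
    ring
  exact le_antisymm (ofReal_mul_kernelDiag_le hU.measurableSet hφ hαβ hz)
    (ofReal_mul_kernelDiag_le hU.measurableSet (hφ.inv hφ0) hβα' hz)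

/-- For holomorphically equivalent spaces, `α(z)·K_α(z,z) = β(z)·K_β(z,z)`. -/
theorem weight_mul_kernelDiag_invariant
    (U : Set ℂ) (hU : IsOpen U) (hne : U.Nonempty)
    (α β : ℂ → ℝ) (hαm : Measurable α) (hβm : Measurable β)
    (hαpos : ∀ z ∈ U, 0 < α z) (hβpos : ∀ z ∈ U, 0 < β z)
    (φ : ℂ → ℂ) (hφ : DifferentiableOn ℂ φ U) (hφ0 : ∀ z ∈ U, φ z ≠ 0)
    (hβα : ∀ z ∈ U, β z = α z / ‖φ z‖ ^ 2) :
    ∀ z ∈ U, ENNReal.ofReal (α z) * kernelDiag U α z =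
      ENNReal.ofReal (β z) * kernelDiag U β z :=
  weight_mul_kernelDiag_invariant_general U hU α β φ hφ hφ0 hβα
end

section
/- Let M ≥ 0 and let ψ : ℂ → ℝ be a continuous function with 0 ≤ ψ(z) ≤ M for all z and ψ(z) = 0 for all z outside the disk D(0,2). Define Φ(z) = ∫_ℂ Γ(ζ) ψ(z - ζ) dζ, where Γ(ζ) = (1/(2π)) log|ζ|. Then Φ(0) ≥ -M/4. -/
/-!
Since `0 ≤ ψ ≤ M`, the integrand `Γ(ζ) ψ(-ζ)` is bounded below by `(M / 2π) · min (log |ζ|) 0`,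
whose integral is, in polar coordinates, `M ∫₀¹ r log r dr = -M/4`. If the integrand is not
integrable, the Bochner integral is `0 ≥ -M/4`.
-/

open MeasureTheory Metric Set

lemma intervalIntegrable_pow_mul_log (n : ℕ) (a b : ℝ) :
    IntervalIntegrable (fun x : ℝ => x ^ n * Real.log x) volume a b :=
  intervalIntegral.intervalIntegrable_log'.continuousOn_mul (by fun_prop)

lemma integral_pow_mul_log_zero_one (n : ℕ) :
    ∫ x in (0 : ℝ)..1, x ^ n * Real.log x = -1 / (n + 1) ^ 2 := by
  have hF : ∀ x ∈ Ioo (0 : ℝ) 1, HasDerivAt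
      (fun x => x ^ (n + 1) * Real.log x / (n + 1) - x ^ (n + 1) / (n + 1) ^ 2)
      (x ^ n * Real.log x) x := by
    intro x hx
    have h := (((hasDerivAt_pow (n + 1) x).mul (Real.hasDerivAt_log hx.1.ne')).div_const
      (n + 1 : ℝ)).sub ((hasDerivAt_pow (n + 1) x).div_const ((n + 1 : ℝ) ^ 2))
    refine h.congr_deriv ?_
    have hx0 : x ≠ 0 := hx.1.ne'
    field_simp
    push_cast
    ring
  have hF_cont : ContinuousOn
      (fun x : ℝ => x ^ (n + 1) * Real.log x / (n + 1) - x ^ (n + 1) / (n + 1) ^ 2)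
      (Icc 0 1) := by
    -- `x ^ (n + 1) * log x = x ^ n * (x * log x)` is continuous through `0`
    simp_rw [pow_succ, mul_assoc]
    exact Continuous.continuousOn (by fun_prop)
  rw [intervalIntegral.integral_eq_sub_of_hasDerivAt_of_le zero_le_one hF_cont hF
    (intervalIntegrable_pow_mul_log n 0 1)]
  simp [neg_div]

lemma eqOn_pow_mul_min_log_zero (n : ℕ) :
    EqOn (fun r : ℝ => r ^ n * min (Real.log r) 0)
      ((Ioc 0 1).indicator fun r => r ^ n * Real.log r) (Ioi 0) := by
  intro r hr
  rcases le_or_gt r 1 with hr1 | hr1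
  · simp [indicator_of_mem (show r ∈ Ioc 0 1 from ⟨hr, hr1⟩),
      Real.log_nonpos (le_of_lt hr) hr1]
  · simp [indicator_of_notMem (show r ∉ Ioc 0 1 from fun h => hr1.not_ge h.2),
      Real.log_nonneg hr1.le]

lemma integrableOn_pow_mul_min_log_zero (n : ℕ) :
    IntegrableOn (fun r : ℝ => r ^ n * min (Real.log r) 0) (Ioi 0) := by
  refine IntegrableOn.congr_fun ?_ (eqOn_pow_mul_min_log_zero n).symm measurableSet_Ioi
  exact ((intervalIntegrable_iff_integrableOn_Ioc_of_le zero_le_one).1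
    (intervalIntegrable_pow_mul_log n 0 1)).integrable_indicator measurableSet_Ioc |>.integrableOn

lemma integral_pow_mul_min_log_zero (n : ℕ) :
    ∫ r in Ioi 0, r ^ n * min (Real.log r) 0 = -1 / (n + 1) ^ 2 := by
  rw [setIntegral_congr_fun measurableSet_Ioi (eqOn_pow_mul_min_log_zero n),
    integral_indicator measurableSet_Ioc, Measure.restrict_restrict measurableSet_Ioc,
    inter_eq_left.2 Ioc_subset_Ioi_self, ← intervalIntegral.integral_of_le zero_le_one,
    integral_pow_mul_log_zero_one]

section AddHaar

variable {E : Type*} [NormedAddCommGroup E] [NormedSpace ℝ E] [Nontrivial E]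
  [FiniteDimensional ℝ E] [MeasurableSpace E] [BorelSpace E]
  (μ : Measure E) [μ.IsAddHaarMeasure]

lemma integrable_min_log_norm_zero : Integrable (fun x : E => min (Real.log ‖x‖) 0) μ :=
  (integrable_fun_norm_addHaar μ (f := fun r => min (Real.log r) 0)).2
    (integrableOn_pow_mul_min_log_zero _)

lemma integral_min_log_norm_zero :
    ∫ x, min (Real.log ‖x‖) 0 ∂μ = -(μ.real (ball 0 1) / Module.finrank ℝ E) := by
  have hdim : ((Module.finrank ℝ E - 1 : ℕ) : ℝ) + 1 = Module.finrank ℝ E := by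
    rw [Nat.cast_sub Module.finrank_pos, Nat.cast_one, sub_add_cancel]
  rw [integral_fun_norm_addHaar μ (fun r => min (Real.log r) 0)]
  simp only [smul_eq_mul, nsmul_eq_mul]
  rw [integral_pow_mul_min_log_zero, hdim]
  have : (Module.finrank ℝ E : ℝ) ≠ 0 := Nat.cast_ne_zero.2 Module.finrank_pos.ne'
  field_simp

end AddHaar

lemma Complex.integral_min_log_norm_zero :
    ∫ z : ℂ, min (Real.log ‖z‖) 0 = -(Real.pi / 2) := by
  rw [_root_.integral_min_log_norm_zero, Complex.finrank_real_complex]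
  simp [Measure.real]

lemma mul_min_zero_le_mul {M a : ℝ} (t : ℝ) (ha : 0 ≤ a) (haM : a ≤ M) :
    M * min t 0 ≤ t * a := by
  rcases le_total t 0 with ht | ht
  · rw [min_eq_left ht]
    nlinarith
  · rw [min_eq_right ht, mul_zero]
    exact mul_nonneg ht ha

theorem convolution_fundamental_solution_lower_bound_general
    (M : ℝ) (hM : 0 ≤ M) (ψ : ℂ → ℝ)
    (hψ0 : ∀ z, 0 ≤ ψ z) (hψM : ∀ z, ψ z ≤ M) :
    -(M / 4) ≤ ∫ ζ, 1 / (2 * Real.pi) * Real.log ‖ζ‖ * ψ (0 - ζ) := by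
  by_cases hintegrable : Integrable (fun ζ : ℂ => 1 / (2 * Real.pi) * Real.log ‖ζ‖ * ψ (0 - ζ))
  · have hminorant (ζ : ℂ) : M / (2 * Real.pi) * min (Real.log ‖ζ‖) 0 ≤
        1 / (2 * Real.pi) * Real.log ‖ζ‖ * ψ (0 - ζ) :=
      calc M / (2 * Real.pi) * min (Real.log ‖ζ‖) 0
          = 1 / (2 * Real.pi) * (M * min (Real.log ‖ζ‖) 0) := by ring
        _ ≤ 1 / (2 * Real.pi) * (Real.log ‖ζ‖ * ψ (0 - ζ)) :=
          mul_le_mul_of_nonneg_left (mul_min_zero_le_mul _ (hψ0 _) (hψM _)) (by positivity)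
        _ = 1 / (2 * Real.pi) * Real.log ‖ζ‖ * ψ (0 - ζ) := by ring
    calc -(M / 4) = ∫ ζ : ℂ, M / (2 * Real.pi) * min (Real.log ‖ζ‖) 0 := by
          rw [integral_const_mul, Complex.integral_min_log_norm_zero]
          field_simp
          ring
      _ ≤ _ := integral_mono ((integrable_min_log_norm_zero volume).const_mul _) hintegrable hminorant
  · rw [integral_undef hintegrable]
    linarith

/-- If `0 ≤ ψ ≤ M` and `ψ` vanishes outside `D(0,2)`, then the convolution
`Φ(z) = ∫ Γ(ζ) ψ(z-ζ) dζ` satisfies `Φ(0) ≥ -M/4`. -/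
theorem convolution_fundamental_solution_lower_bound
    (M : ℝ) (hM : 0 ≤ M) (ψ : ℂ → ℝ) (hψc : Continuous ψ)
    (hψ0 : ∀ z, 0 ≤ ψ z) (hψM : ∀ z, ψ z ≤ M)
    (hsupp : ∀ z ∉ Metric.ball (0 : ℂ) 2, ψ z = 0) :
    -(M / 4) ≤ ∫ ζ, 1 / (2 * Real.pi) * Real.log ‖ζ‖ * ψ (0 - ζ) :=
  convolution_fundamental_solution_lower_bound_general M hM ψ hψ0 hψM
end
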